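/- Concretization is transitively compatible with slicing composition: if t• = slice(t,P) and s• = slice(t•, Q) for Q ⊆ P ∩ Pos(t•), then slice(t,Q) = s•, i.e., slicing a slice with a smaller criterion equals directly slicing the original term with that criterion. -/

import Mathlib

open scoped Classical

abbrev Pos := List ℕ

/-- Ground terms over a signature `F` (variadic). -/
inductive GTerm (F : Type) : Type
  | fn : F → List (GTerm F) → GTerm F

/-- Term slices: terms over `F ∪ {•}`. -/
inductive STerm (F : Type) : Type
  | bullet : STerm F
  | fn : F → List (STerm F) → STerm F

/-- Terms with variables over `F`. -/
inductive VTerm (F : Type) : Type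
  | var : ℕ → VTerm F
  | fn : F → List (VTerm F) → VTerm F

variable {F : Type}

def GTerm.subtermAt : Pos → GTerm F → Option (GTerm F)
  | [], t => some t
  | i :: p, .fn _ args => (args[i]?).bind (GTerm.subtermAt p)

def GTerm.isPos (p : Pos) (t : GTerm F) : Prop := (GTerm.subtermAt p t).isSome

def GTerm.rootSym : GTerm F → F
  | .fn f _ => f

def GTerm.rootSymAt (p : Pos) (t : GTerm F) : Option F :=
  (GTerm.subtermAt p t).map GTerm.rootSym

def STerm.subtermAt : Pos → STerm F → Option (STerm F)
  | [], t => some t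
  | _ :: _, .bullet => none
  | i :: p, .fn _ args => (args[i]?).bind (STerm.subtermAt p)

def STerm.rootSym : STerm F → Option F
  | .bullet => none
  | .fn f _ => some f

def STerm.rootSymAt (p : Pos) (t : STerm F) : Option F :=
  (STerm.subtermAt p t).bind STerm.rootSym

/-- Non-`•` positions of a term slice. -/
def STerm.isPos (p : Pos) (t : STerm F) : Prop :=
  ∃ u, STerm.subtermAt p t = some u ∧ u ≠ .bullet

def VTerm.subtermAt : Pos → VTerm F → Option (VTerm F)
  | [], t => some t
  | _ :: _, .var _ => none
  | i :: p, .fn _ args => (args[i]?).bind (VTerm.subtermAt p)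

def VTerm.rootSym : VTerm F → Option F
  | .var _ => none
  | .fn f _ => some f

def VTerm.rootSymAt (p : Pos) (t : VTerm F) : Option F :=
  (VTerm.subtermAt p t).bind VTerm.rootSym

/-- Positions of the redex/contractum pattern: non-variable positions. -/
def VTerm.patPos (p : Pos) (t : VTerm F) : Prop :=
  ∃ f args, VTerm.subtermAt p t = some (.fn f args)

mutual
  def VTerm.subst (σ : ℕ → GTerm F) : VTerm F → GTerm F
    | .var n => σ n
    | .fn f args => .fn f (VTerm.substList σ args)
  def VTerm.substList (σ : ℕ → GTerm F) : List (VTerm F) → List (GTerm F)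
    | [] => []
    | a :: as => VTerm.subst σ a :: VTerm.substList σ as
end

mutual
  def GTerm.replaceAt : GTerm F → Pos → GTerm F → GTerm F
    | _, [], r => r
    | .fn f args, i :: p, r => .fn f (GTerm.replaceAtList args i p r)
  def GTerm.replaceAtList : List (GTerm F) → ℕ → Pos → GTerm F → List (GTerm F)
    | [], _, _, _ => []
    | a :: as, 0, p, r => GTerm.replaceAt a p r :: as
    | a :: as, n + 1, p, r => a :: GTerm.replaceAtList as n p r
end

mutual
  def STerm.replaceAt : STerm F → Pos → STerm F → STerm F
    | _, [], r => r
    | .bullet, _ :: _, _ => .bullet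
    | .fn f args, i :: p, r => .fn f (STerm.replaceAtList args i p r)
  def STerm.replaceAtList : List (STerm F) → ℕ → Pos → STerm F → List (STerm F)
    | [], _, _, _ => []
    | a :: as, 0, p, r => STerm.replaceAt a p r :: as
    | a :: as, n + 1, p, r => a :: STerm.replaceAtList as n p r
end

mutual
  noncomputable def GTerm.slRec (P : Set Pos) : GTerm F → Pos → STerm F
    | .fn f args, p =>
        if ∃ w, (p ++ w) ∈ P then .fn f (GTerm.slRecList P args p 0) else .bullet
  noncomputable def GTerm.slRecList (P : Set Pos) : List (GTerm F) → Pos → ℕ → List (STerm F)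
    | [], _, _ => []
    | a :: as, p, i => GTerm.slRec P a (p ++ [i]) :: GTerm.slRecList P as p (i + 1)
end

/-- `slice(t,P)`. -/
noncomputable def GTerm.slice (t : GTerm F) (P : Set Pos) : STerm F := GTerm.slRec P t []

/-- Concretization: `Conc t• t'` iff replacing the `•`s of `t•` by distinct fresh
variables yields a term more general than `t'`. -/
inductive Conc {F : Type} : STerm F → GTerm F → Prop
  | bullet (t : GTerm F) : Conc .bullet t
  | fn (f : F) (as : List (STerm F)) (bs : List (GTerm F))
      (hlen : as.length = bs.length)
      (h : ∀ (i : ℕ) (a : STerm F) (b : GTerm F),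
            as[i]? = some a → bs[i]? = some b → Conc a b) :
      Conc (.fn f as) (.fn f bs)

/-- Origin positions `◁_μ^L w` of a labeled rewrite step `t0 → t1`. -/
def originSet {α : Type} (t0 t1 : GTerm F) (Ls Lt : Pos → Set α) (w : Pos) : Set Pos :=
  {v | GTerm.isPos v t0 ∧ ∃ p, GTerm.isPos p t1 ∧ p <+: w ∧ Ls v ⊆ Lt p}

/-- A rewrite step with rule `lam → rho` at position `q`. -/
def RewritesAt (lam rho : VTerm F) (q : Pos) (t0 t1 : GTerm F) : Prop :=
  ∃ σ : ℕ → GTerm F, GTerm.subtermAt q t0 = some (VTerm.subst σ lam) ∧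
    t1 = GTerm.replaceAt t0 q (VTerm.subst σ rho)

def leftLinear (lam : VTerm F) : Prop :=
  ∀ n p p', VTerm.subtermAt p lam = some (.var n) →
    VTerm.subtermAt p' lam = some (.var n) → p = p'

def nonCollapsing (rho : VTerm F) : Prop := ∀ n, rho ≠ .var n
variable {F : Type}

mutual
  noncomputable def STerm.slRec (P : Set Pos) : STerm F → Pos → STerm F
    | .bullet, _ => .bullet
    | .fn f args, p =>
        if ∃ w, (p ++ w) ∈ P then .fn f (STerm.slRecList P args p 0) else .bullet
  noncomputable def STerm.slRecList (P : Set Pos) : List (STerm F) → Pos → ℕ → List (STerm F)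
    | [], _, _ => []
    | a :: as, p, i => STerm.slRec P a (p ++ [i]) :: STerm.slRecList P as p (i + 1)
end

/-- Slicing a term slice. -/
noncomputable def STerm.sliceS (t : STerm F) (P : Set Pos) : STerm F := STerm.slRec P t []

theorem slRecList_getElem (P : Set Pos) :
    ∀ (as : List (GTerm F)) (p : Pos) (i k : ℕ),
      (GTerm.slRecList P as p i)[k]? =
        (as[k]?).map (fun a => GTerm.slRec P a (p ++ [i + k])) := by
  intro as
  induction as with
  | nil => intro p i k; simp [GTerm.slRecList]
  | cons a as ih =>
    intro p i k
    rw [GTerm.slRecList]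
    cases k with
    | zero => simp
    | succ k =>
      simp only [List.getElem?_cons_succ, ih]
      have : i + 1 + k = i + (k + 1) := by omega
      rw [this]

theorem isPos_of_slRec_isPos (P : Set Pos) :
    ∀ (w : Pos) (t : GTerm F) (p : Pos),
      STerm.isPos w (GTerm.slRec P t p) → GTerm.isPos w t := by
  intro w
  induction w with
  | nil =>
    intro t p _
    exact Option.isSome_some (a := t)
  | cons i w ih =>
    rintro ⟨f, args⟩ p ⟨u, hu, hne⟩
    rw [GTerm.slRec] at hu
    split at hu
    · simp only [STerm.subtermAt] at hu
      rcases Option.bind_eq_some_iff.mp hu with ⟨e, he, hsub⟩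
      rw [slRecList_getElem] at he
      rcases Option.map_eq_some_iff.mp he with ⟨a, ha, rfl⟩
      have : GTerm.isPos w a := ih a _ ⟨u, hsub, hne⟩
      show (GTerm.subtermAt (i :: w) (GTerm.fn f args)).isSome
      simp only [GTerm.subtermAt, ha, Option.bind_some]
      exact this
    · simp [STerm.subtermAt] at hu

mutual
theorem slRec_slRec (P Q : Set Pos) (hQP : Q ⊆ P) (t : GTerm F) (p : Pos)
    (h : ∀ w, (p ++ w) ∈ Q → GTerm.isPos w t) :
    STerm.slRec Q (GTerm.slRec P t p) p = GTerm.slRec Q t p :=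
  match t, h with
  | .fn f args, h => by
    rw [GTerm.slRec, GTerm.slRec]
    by_cases hq : ∃ w, (p ++ w) ∈ Q
    · have hp : ∃ w, (p ++ w) ∈ P := hq.imp (fun w hw => hQP hw)
      rw [if_pos hp, if_pos hq, STerm.slRec, if_pos hq]
      congr 1
      exact slRecList_slRecList P Q hQP args p 0
        (fun k a w ha hw => by
          have := h ([k] ++ w) (by simpa using hw)
          simp only [GTerm.isPos, List.singleton_append, GTerm.subtermAt, ha, Option.bind_some] at this
          exact this)
    · rw [if_neg hq]
      split
      · rw [STerm.slRec, if_neg hq]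
      · rw [STerm.slRec]
termination_by sizeOf t

theorem slRecList_slRecList (P Q : Set Pos) (hQP : Q ⊆ P) (as : List (GTerm F)) (p : Pos)
    (i : ℕ)
    (h : ∀ k a w, as[k]? = some a → (p ++ [i + k] ++ w) ∈ Q → GTerm.isPos w a) :
    STerm.slRecList Q (GTerm.slRecList P as p i) p i = GTerm.slRecList Q as p i := by
  match as with
  | [] => rw [GTerm.slRecList, STerm.slRecList, GTerm.slRecList]
  | a :: as =>
    rw [GTerm.slRecList, STerm.slRecList, GTerm.slRecList]
    congr 1
    · exact slRec_slRec P Q hQP a (p ++ [i])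
        (fun w hw => h 0 a w (by simp) (by simpa using hw))
    · exact slRecList_slRecList P Q hQP as p (i + 1)
        (fun k b w hb hw => h (k + 1) b w (by simpa using hb)
          ((by omega : i + (k + 1) = i + 1 + k) ▸ hw))
termination_by sizeOf as
end

theorem slice_of_slice {F : Type} (t : GTerm F) (P Q : Set Pos)
    (hQP : Q ⊆ P) (hQpos : ∀ q ∈ Q, STerm.isPos q (GTerm.slice t P)) :
    STerm.sliceS (GTerm.slice t P) Q = GTerm.slice t Q := by
  exact slRec_slRec P Q hQP t []
    (fun w hw => isPos_of_slRec_isPos P w t [] (hQpos w (by simpa using hw)))
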